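/- arXiv:2112.13359 — 3 statements merged into one kernel-verified Lean document; each statement's English description precedes it below -/
import Mathlib

section
/- Let D be an UDAF digraph. The relation ~_D on the commutative monoid ℕ^{V_{D°}} of finite multisets over core vertices, defined by M₁ ~_D M₂ iff M₁ and M₂ have a common refinement, is a congruence: if M₁ ~_D M₂ and M₃ ~_D M₄ then M₁ + M₃ ~_D M₂ + M₄. -/
structure Digraph' where
  V : Type
  E : Type
  s : E → V
  t : E → V

structure DHom (D₁ D₂ : Digraph') where
  vMap : D₁.V → D₂.V
  eMap : D₁.E → D₂.E
  hs : ∀ e, D₂.s (eMap e) = vMap (D₁.s e)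
  ht : ∀ e, D₂.t (eMap e) = vMap (D₁.t e)

def BiWalk (D : Digraph') : Type :=
  { f : ℤ → D.E // ∀ i : ℤ, D.t (f i) = D.s (f (i + 1)) }

def biMap {D₁ D₂ : Digraph'} (φ : DHom D₁ D₂) (w : BiWalk D₁) : BiWalk D₂ :=
  ⟨fun i => φ.eMap (w.1 i), fun i => by rw [φ.ht, φ.hs, w.2 i]⟩

structure FwdWalk (D : Digraph') where
  ed : ℕ → D.E
  chain : ∀ i : ℕ, D.t (ed i) = D.s (ed (i + 1))

structure BwdWalk (D : Digraph') where
  ed : ℕ → D.E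
  chain : ∀ i : ℕ, D.t (ed (i + 1)) = D.s (ed i)

/-- UDAF digraph condition: for each vertex, the number of infinite forwards walks
from it and of infinite backwards walks to it are each `≠ 1`. -/
def IsUDAF (D : Digraph') : Prop :=
  (∀ v : D.V, ¬∃! p : FwdWalk D, D.s (p.ed 0) = v) ∧
  (∀ v : D.V, ¬∃! p : BwdWalk D, D.t (p.ed 0) = v)

/-- Edges lying on some bi-infinite walk. -/
def CoreE (D : Digraph') : Set D.E := {e | ∃ w : BiWalk D, ∃ i : ℤ, w.1 i = e}

/-- Vertices lying on some bi-infinite walk. -/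
def CoreV (D : Digraph') : Set D.V := {v | ∃ w : BiWalk D, ∃ i : ℤ, D.s (w.1 i) = v}

structure FinWalk (D : Digraph') where
  start : D.V
  ed : List D.E
  chain : List.Chain' (fun a b => D.t a = D.s b) ed
  hstart : ∀ e ∈ ed.head?, D.s e = start

def endVert (D : Digraph') (p : FinWalk D) : D.V :=
  p.ed.getLast?.elim p.start D.t

/-- The infinite forwards walk `q` begins with the finite walk `p`. -/
def Begins (D : Digraph') (q : FwdWalk D) (p : FinWalk D) : Prop :=
  D.s (q.ed 0) = p.start ∧ ∀ (i : ℕ) (h : i < p.ed.length), q.ed i = p.ed.get ⟨i, h⟩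

/-- `M₂` is obtained from `M₁` by replacing one copy of a core vertex `v` by the
endpoint multiset of a finite exhaustive prefix-free family of core walks from `v`. -/
def ElemRefine (D : Digraph') (M₁ M₂ : ↥(CoreV D) → ℕ) : Prop := by
  classical
  exact ∃ (v : ↥(CoreV D)) (P : Finset (FinWalk D)),
    0 < M₁ v ∧
    (∀ p ∈ P, p.start = v.1 ∧ ∀ e ∈ p.ed, e ∈ CoreE D) ∧
    (∀ q : FwdWalk D, D.s (q.ed 0) = v.1 → (∀ i, q.ed i ∈ CoreE D) →
      ∃! p, p ∈ P ∧ Begins D q p) ∧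
    ∀ w : ↥(CoreV D),
      M₂ w = (M₁ w - (if w = v then 1 else 0)) + (P.filter (fun p => endVert D p = w.1)).card

/-- Refinement: a finite composite of elementary refinements. -/
def Refine (D : Digraph') : (↥(CoreV D) → ℕ) → (↥(CoreV D) → ℕ) → Prop :=
  Relation.ReflTransGen (ElemRefine D)

section

variable {D : Digraph'}

theorem ElemRefine.add_right {M N : ↥(CoreV D) → ℕ} (h : ElemRefine D M N)
    (K : ↥(CoreV D) → ℕ) : ElemRefine D (M + K) (N + K) := by
  obtain ⟨v, P, hv, hP, hexhaustive, hN⟩ := h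
  refine ⟨v, P, hv.trans_le (Nat.le_add_right _ _), hP, hexhaustive, fun w => ?_⟩
  rw [Pi.add_apply, Pi.add_apply, hN w]
  split_ifs with hw
  · subst hw
    omega
  · omega

theorem Refine.add_right {M N : ↥(CoreV D) → ℕ} (h : Refine D M N) (K : ↥(CoreV D) → ℕ) :
    Refine D (M + K) (N + K) := by
  induction h with
  | refl => exact .refl
  | tail _ hstep ih => exact ih.tail (hstep.add_right K)

theorem Refine.add_left {M N : ↥(CoreV D) → ℕ} (h : Refine D M N) (K : ↥(CoreV D) → ℕ) :
    Refine D (K + M) (K + N) := by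
  simpa only [add_comm K] using h.add_right K

theorem Refine.add {M N M' N' : ↥(CoreV D) → ℕ} (h : Refine D M N) (h' : Refine D M' N') :
    Refine D (M + M') (N + N') :=
  (h.add_right M').trans (h'.add_left N)

end

theorem stmt11_general (D : Digraph')
    (M₁ M₂ M₃ M₄ : ↥(CoreV D) → ℕ)
    (h₁₂ : ∃ N, Refine D M₁ N ∧ Refine D M₂ N)
    (h₃₄ : ∃ N, Refine D M₃ N ∧ Refine D M₄ N) :
    ∃ N, Refine D (M₁ + M₃) N ∧ Refine D (M₂ + M₄) N := by
  obtain ⟨N, h₁, h₂⟩ := h₁₂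
  obtain ⟨N', h₃, h₄⟩ := h₃₄
  exact ⟨N + N', h₁.add h₃, h₂.add h₄⟩

/-- The common-refinement relation `∼_D` is a congruence on the commutative monoid
of multisets over core vertices. -/
theorem stmt11 (D : Digraph') [Fintype D.V] [Fintype D.E] (hU : IsUDAF D)
    (M₁ M₂ M₃ M₄ : ↥(CoreV D) → ℕ)
    (h₁₂ : ∃ N, Refine D M₁ N ∧ Refine D M₂ N)
    (h₃₄ : ∃ N, Refine D M₃ N ∧ Refine D M₄ N) :
    ∃ N, Refine D (M₁ + M₃) N ∧ Refine D (M₂ + M₄) N :=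
  stmt11_general D M₁ M₂ M₃ M₄ h₁₂ h₃₄
end

section
/- Let D be a finite digraph equal to its core, with adjacency matrix Adj_D. The quotient of the commutative monoid ℕ^{V_D} by the congruence generated by the pairs (χ_v, Σ_w (v,w)Adj_D · χ_w) for each vertex v equals the quotient by the 'common refinement' congruence ~_D; i.e., the UDAF dimension monoid of D is presented as a commutative monoid by generators V_D and relations v = Σ_w Adj_D(v,w)·w. -/
open Classical in
noncomputable def chi (D : Digraph') (v : ↥(CoreV D)) : ↥(CoreV D) → ℕ :=
  fun w => if w = v then 1 else 0

/-- Row `v` of the adjacency matrix, as a multiset over the core vertices. -/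
noncomputable def adjRow (D : Digraph') (v : ↥(CoreV D)) : ↥(CoreV D) → ℕ :=
  fun w => Set.ncard {e : D.E | D.s e = v.1 ∧ D.t e = w.1}

/-!
Call the standard `(v,1)`-refinement, which replaces one copy of `v` by the targets of the edges
leaving `v`, a split. Splits are elementary refinements, and conversely every elementary
refinement along a family `P` is a composite of splits: since every vertex lies in the core, every
finite walk extends to an infinite one, which forces all one-edge extensions of the parent of a
longest walk of `P` to lie in `P`; replacing them by their parent undoes one split and shortens
`P`. On the other side, two splits of the same multiset either agree or commute, so by
Church–Rosser "having a common split-descendant" is an additive equivalence relation; it contains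
the generating pairs and lies in the congruence they generate.
-/

namespace FinWalk

variable {D : Digraph'}

@[ext]
lemma ext {p r : FinWalk D} (hstart : p.start = r.start) (hed : p.ed = r.ed) : p = r := by
  cases p; cases r; cases hstart; cases hed; rfl

def nil (v : D.V) : FinWalk D := ⟨v, [], List.isChain_nil, by simp⟩

lemma endVert_eq_t_of_mem_getLast? {p : FinWalk D} {e : D.E} (he : e ∈ p.ed.getLast?) :
    endVert D p = D.t e := by
  simp [endVert, Option.mem_def.1 he]

def concat (p : FinWalk D) (f : D.E) (hf : D.s f = endVert D p) : FinWalk D where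
  start := p.start
  ed := p.ed ++ [f]
  chain := p.chain.append (List.isChain_singleton f) fun e he f' hf' => by
    obtain rfl : f' = f := by simpa using hf'.symm
    rw [hf, endVert_eq_t_of_mem_getLast? he]
  hstart e he := by
    rcases List.eq_nil_or_concat p.ed with hnil | ⟨l, g, hl⟩
    · simp only [hnil, List.nil_append, List.head?_cons, Option.mem_def,
        Option.some.injEq] at he
      rw [← he, hf, endVert, hnil]
      rfl
    · exact p.hstart e (by simpa [hl] using he)

variable {p r : FinWalk D} {f : D.E} {hf : D.s f = endVert D p}

@[simp] lemma concat_start : (p.concat f hf).start = p.start := rfl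

@[simp] lemma concat_ed : (p.concat f hf).ed = p.ed ++ [f] := rfl

@[simp] lemma endVert_nil (v : D.V) : endVert D (nil v) = v := rfl

@[simp] lemma endVert_concat : endVert D (p.concat f hf) = D.t f := by
  simp [endVert]

lemma exists_eq_concat (hp : p.ed ≠ []) : ∃ p' f hf, p = concat p' f hf := by
  obtain ⟨l, f, hl⟩ := (List.eq_nil_or_concat p.ed).resolve_left hp
  rw [List.concat_eq_append] at hl
  have hchain : List.IsChain (fun a b => D.t a = D.s b) (l ++ [f]) := hl ▸ p.chain
  let p' : FinWalk D := ⟨p.start, l, hchain.left_of_append,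
    fun e he => p.hstart e (hl ▸ List.mem_head?_append_of_mem_head? he)⟩
  refine ⟨p', f, ?_, FinWalk.ext rfl hl⟩
  rcases List.eq_nil_or_concat l with rfl | ⟨l', g, rfl⟩
  · exact p.hstart f (by simp [hl])
  · rw [endVert_eq_t_of_mem_getLast? (p := p') (e := g) (by simp [p'])]
    exact ((List.isChain_append.1 hchain).2.2 g (by simp) f (by simp)).symm

open Classical in
noncomputable def children [Fintype D.E] (p : FinWalk D) : Finset (FinWalk D) :=
  Finset.univ.image fun e : {e : D.E // D.s e = endVert D p} => p.concat e e.2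

lemma mem_children [Fintype D.E] : r ∈ p.children ↔ ∃ f hf, p.concat f hf = r := by
  classical
  simp [children]

end FinWalk

open FinWalk

section Begins

variable {D : Digraph'} {q q' : FwdWalk D} {p r : FinWalk D}

lemma Begins.eq_of_length_eq (hp : Begins D q p) (hr : Begins D q r)
    (hlen : p.ed.length = r.ed.length) : p = r :=
  FinWalk.ext (hp.1.symm.trans hr.1)
    (List.ext_get hlen fun i h₁ h₂ => (hp.2 i h₁).symm.trans (hr.2 i h₂))

lemma Begins.of_length_le (hr : Begins D q r) (hp : Begins D q p)
    (hle : r.ed.length ≤ p.ed.length) (hp' : Begins D q' p) : Begins D q' r :=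
  ⟨hp'.1.trans (hp.1.symm.trans hr.1), fun i hi =>
    (hp'.2 i (by omega)).trans ((hp.2 i (by omega)).symm.trans (hr.2 i hi))⟩

lemma Begins.s_ed_length (h : Begins D q p) : D.s (q.ed p.ed.length) = endVert D p := by
  rcases List.eq_nil_or_concat p.ed with hnil | ⟨l, f, hl⟩
  · simpa [endVert, hnil] using h.1
  · have hlen : p.ed.length = l.length + 1 := by simp [hl]
    rw [hlen, ← q.chain, h.2 l.length (by omega)]
    simp [endVert, hl]

lemma begins_nil (v : D.V) : Begins D q (nil v) ↔ D.s (q.ed 0) = v :=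
  ⟨fun h => h.1, fun h => ⟨h, fun i hi => absurd hi (by simp [nil])⟩⟩

lemma begins_concat_iff {f : D.E} {hf : D.s f = endVert D p} :
    Begins D q (p.concat f hf) ↔ Begins D q p ∧ q.ed p.ed.length = f := by
  constructor
  · intro h
    refine ⟨⟨h.1, fun i hi => ?_⟩, ?_⟩
    · simpa [List.getElem_append_left hi] using h.2 i (by simp; omega)
    · simpa using h.2 p.ed.length (by simp)
  · rintro ⟨h, hlast⟩
    refine ⟨h.1, fun i hi => ?_⟩
    simp only [concat_ed, List.length_append, List.length_singleton] at hi
    rcases (Nat.lt_succ_iff.1 hi).lt_or_eq with hi | rfl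
    · simpa [List.getElem_append_left hi] using h.2 i hi
    · simpa using hlast

lemma begins_iff_exists_mem_children [Fintype D.E] :
    Begins D q p ↔ ∃ r ∈ p.children, Begins D q r := by
  constructor
  · intro h
    exact ⟨_, mem_children.2 ⟨_, h.s_ed_length, rfl⟩, begins_concat_iff.2 ⟨h, rfl⟩⟩
  · rintro ⟨r, hr, hqr⟩
    obtain ⟨f, hf, rfl⟩ := mem_children.1 hr
    exact (begins_concat_iff.1 hqr).1

lemma FwdWalk.exists_of_mem_coreV {v : D.V} (hv : v ∈ CoreV D) :
    ∃ q : FwdWalk D, D.s (q.ed 0) = v := by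
  obtain ⟨w, i, hi⟩ := hv
  refine ⟨⟨fun n => w.1 (i + n), fun n => ?_⟩, by simpa using hi⟩
  rw [w.2 (i + n)]
  push_cast
  ring_nf

lemma exists_begins_of_mem_coreV (h : endVert D p ∈ CoreV D) : ∃ q, Begins D q p := by
  obtain ⟨tl, htl⟩ := FwdWalk.exists_of_mem_coreV h
  let n := p.ed.length
  let ed : ℕ → D.E := fun i => if hi : i < n then p.ed[i] else tl.ed (i - n)
  have hchain : ∀ i, D.t (ed i) = D.s (ed (i + 1)) := by
    intro i
    rcases lt_trichotomy (i + 1) n with hi | hi | hi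
    · simpa [ed, hi, Nat.lt_of_succ_lt hi] using List.isChain_iff_getElem.1 p.chain i hi
    · have hlast : p.ed.getLast? = some p.ed[i] := by
        rw [List.getLast?_eq_getElem?]
        simp only [n] at hi
        simp [← hi]
      simpa [ed, hi, show i < n by omega, ← endVert_eq_t_of_mem_getLast? hlast] using htl.symm
    · simpa [ed, show ¬ i < n by omega, show ¬ i + 1 < n by omega,
        show i + 1 - n = i - n + 1 by omega] using tl.chain (i - n)
  refine ⟨⟨ed, hchain⟩, ?_, fun i hi => by simp [ed, n, hi]⟩
  rcases Nat.eq_zero_or_pos n with hn | hn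
  · simpa [ed, hn, endVert, List.length_eq_zero_iff.1 hn] using htl
  · simpa [ed, hn] using p.hstart p.ed[0] (by simp [List.head?_eq_getElem?])

end Begins

/-- `P` is an exhaustive prefix-free family of finite walks from `v`. -/
def IsCut (D : Digraph') (v : D.V) (P : Finset (FinWalk D)) : Prop :=
  (∀ p ∈ P, p.start = v) ∧ ∀ q : FwdWalk D, D.s (q.ed 0) = v → ∃! p, p ∈ P ∧ Begins D q p

namespace IsCut

variable {D : Digraph'} {v : D.V} {P S : Finset (FinWalk D)} {p p' r : FinWalk D} {q : FwdWalk D}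

lemma eq_of_begins (hP : IsCut D v P) (hp : p ∈ P) (hr : r ∈ P) (hqp : Begins D q p)
    (hqr : Begins D q r) : p = r :=
  (hP.2 q (hqp.1.trans (hP.1 p hp))).unique ⟨hp, hqp⟩ ⟨hr, hqr⟩

lemma children_nil [Fintype D.E] (v : D.V) : IsCut D v (nil v).children := by
  refine ⟨fun r hr => ?_, fun q hq => ?_⟩
  · obtain ⟨f, hf, rfl⟩ := mem_children.1 hr
    rfl
  · obtain ⟨r, hr, hqr⟩ := begins_iff_exists_mem_children.1 ((begins_nil v).2 hq)
    refine ⟨r, ⟨hr, hqr⟩, fun r' ⟨hr', hqr'⟩ => hqr'.eq_of_length_eq hqr ?_⟩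
    obtain ⟨f, hf, rfl⟩ := mem_children.1 hr
    obtain ⟨f', hf', rfl⟩ := mem_children.1 hr'
    simp

lemma eq_singleton_nil (hV : CoreV D = Set.univ) (hP : IsCut D v P)
    (hnil : ∀ p ∈ P, p.ed = []) : P = {nil v} := by
  have hmem : ∀ p ∈ P, p = nil v := fun p hp => FinWalk.ext (hP.1 p hp) (hnil p hp)
  obtain ⟨q, hq⟩ := FwdWalk.exists_of_mem_coreV (hV ▸ Set.mem_univ v)
  obtain ⟨r, ⟨hr, -⟩, -⟩ := hP.2 q hq
  exact Finset.eq_singleton_iff_unique_mem.2 ⟨hmem r hr ▸ hr, hmem⟩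

lemma notMem_of_concat_mem (hV : CoreV D = Set.univ) (hP : IsCut D v P) {f : D.E}
    {hf : D.s f = endVert D p'} (hp : p'.concat f hf ∈ P) : p' ∉ P := by
  intro hp'
  obtain ⟨q, hq⟩ := exists_begins_of_mem_coreV (hV ▸ Set.mem_univ (endVert D (p'.concat f hf)))
  have := hP.eq_of_begins hp hp' hq (begins_concat_iff.1 hq).1
  simpa using congrArg (fun r : FinWalk D => r.ed.length) this

-- A shorter member beginning an extension of a child would be a proper prefix of
-- `p'.concat f hf`, which is impossible in a cut.
lemma children_subset [Fintype D.E] (hV : CoreV D = Set.univ) (hP : IsCut D v P) {f : D.E}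
    {hf : D.s f = endVert D p'} (hp : p'.concat f hf ∈ P)
    (hmax : ∀ r ∈ P, r.ed.length ≤ p'.ed.length + 1) : p'.children ⊆ P := by
  intro c hc
  obtain ⟨e, he, rfl⟩ := mem_children.1 hc
  obtain ⟨q, hq⟩ := exists_begins_of_mem_coreV (hV ▸ Set.mem_univ (endVert D (p'.concat e he)))
  obtain ⟨r, ⟨hr, hqr⟩, -⟩ := hP.2 q (hq.1.trans (hP.1 (p'.concat f hf) hp))
  rcases le_or_gt r.ed.length p'.ed.length with hle | hlt
  · obtain ⟨q', hq'⟩ :=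
      exists_begins_of_mem_coreV (hV ▸ Set.mem_univ (endVert D (p'.concat f hf)))
    have hq'r := hqr.of_length_le (begins_concat_iff.1 hq).1 hle (begins_concat_iff.1 hq').1
    have := congrArg (fun r : FinWalk D => r.ed.length) (hP.eq_of_begins hr hp hq'r hq')
    simp only [concat_ed, List.length_append, List.length_singleton] at this
    omega
  · have hlen : r.ed.length = (p'.concat e he).ed.length := by
      simp only [concat_ed, List.length_append, List.length_singleton]
      have := hmax r hr
      omega
    exact hqr.eq_of_length_eq hq hlen ▸ hr

lemma insert_sdiff [DecidableEq (FinWalk D)] (hP : IsCut D v P) (hS : S ⊆ P) (hp : p.start = v)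
    (hpS : ∀ q, Begins D q p ↔ ∃ r ∈ S, Begins D q r) : IsCut D v (insert p (P \ S)) := by
  refine ⟨fun r hr => ?_, fun q hq => ?_⟩
  · rcases Finset.mem_insert.1 hr with rfl | hr
    · exact hp
    · exact hP.1 r (Finset.mem_sdiff.1 hr).1
  obtain ⟨r, ⟨hr, hqr⟩, huniq⟩ := hP.2 q hq
  by_cases hrS : r ∈ S
  · refine ⟨p, ⟨Finset.mem_insert_self _ _, (hpS q).2 ⟨r, hrS, hqr⟩⟩, ?_⟩
    rintro r' ⟨hr', hqr'⟩
    rcases Finset.mem_insert.1 hr' with rfl | hr'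
    · rfl
    · exact absurd (huniq r' ⟨(Finset.mem_sdiff.1 hr').1, hqr'⟩ ▸ hrS) (Finset.mem_sdiff.1 hr').2
  · refine ⟨r, ⟨Finset.mem_insert_of_mem (Finset.mem_sdiff.2 ⟨hr, hrS⟩), hqr⟩, ?_⟩
    rintro r' ⟨hr', hqr'⟩
    rcases Finset.mem_insert.1 hr' with rfl | hr'
    · obtain ⟨s, hs, hqs⟩ := (hpS q).1 hqr'
      exact absurd (huniq s ⟨hS hs, hqs⟩ ▸ hs) hrS
    · exact huniq r' ⟨(Finset.mem_sdiff.1 hr').1, hqr'⟩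

end IsCut

open Relation

section Multisets

variable {D : Digraph'}

lemma chi_le_of_add_chi_eq_add_chi {u v : ↥(CoreV D)} {C C' : ↥(CoreV D) → ℕ} (huv : u ≠ v)
    (h : C + chi D u = C' + chi D v) : chi D v ≤ C := by
  intro w
  have := congrFun h w
  by_cases hw : w = v
  · subst hw
    simp [chi, Ne.symm huv] at this ⊢
    omega
  · simp [chi, hw]

open Classical in
noncomputable def endCount (D : Digraph') (P : Finset (FinWalk D)) : ↥(CoreV D) → ℕ :=
  fun w => (P.filter fun p => endVert D p = w.1).card

variable {P S : Finset (FinWalk D)} {p : FinWalk D} {u : ↥(CoreV D)}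

lemma endCount_singleton_nil : endCount D {nil u.1} = chi D u := by
  funext w
  by_cases hw : w = u
  · subst hw
    simp [endCount, chi, Finset.filter_singleton]
  · simp [endCount, chi, hw, Finset.filter_singleton, Ne.symm (Subtype.coe_ne_coe.2 hw)]

lemma endCount_insert [DecidableEq (FinWalk D)] (hp : p ∉ P) (hu : endVert D p = u.1) :
    endCount D (insert p P) = endCount D P + chi D u := by
  funext w
  by_cases hw : w = u
  · subst hw
    simp [endCount, chi, Finset.filter_insert, hu, Finset.card_insert_of_notMem, hp]
  · have : endVert D p ≠ w.1 := hu ▸ fun h => hw (Subtype.ext h.symm)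
    simp [endCount, chi, Finset.filter_insert, hw, this]

lemma endCount_sdiff_add [DecidableEq (FinWalk D)] (hS : S ⊆ P) :
    endCount D (P \ S) + endCount D S = endCount D P := by
  classical
  funext w
  simp only [endCount, Pi.add_apply]
  rw [← Finset.card_union_of_disjoint (Finset.disjoint_filter_filter Finset.sdiff_disjoint),
    ← Finset.filter_union, Finset.sdiff_union_of_subset hS]

lemma endCount_children [Fintype D.E] (hu : endVert D p = u.1) :
    endCount D p.children = adjRow D u := by
  funext w
  rw [endCount, adjRow, ← Set.ncard_coe_finset]
  symm
  refine Set.ncard_congr (fun e he => p.concat e (he.1.trans hu.symm)) ?_ ?_ ?_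
  · rintro e ⟨hs, ht⟩
    simpa [mem_children, ht] using ⟨e, hs.trans hu.symm, rfl⟩
  · intro e e' _ _ h
    simpa using congrArg FinWalk.ed h
  · intro r hr
    simp only [Finset.coe_filter, Set.mem_ofPred_eq, mem_children] at hr
    obtain ⟨⟨f, hf, rfl⟩, hend⟩ := hr
    exact ⟨f, ⟨hf.trans hu, by simpa using hend⟩, rfl⟩

end Multisets

/-- The standard `(v,1)`-refinement, with the remaining multiset `C` made explicit to avoid
truncated subtraction. -/
def SplitStep (D : Digraph') (A B : ↥(CoreV D) → ℕ) : Prop :=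
  ∃ v C, A = C + chi D v ∧ B = C + adjRow D v

namespace SplitStep

variable {D : Digraph'} {A A' B B' : ↥(CoreV D) → ℕ}

lemma add_right (X : ↥(CoreV D) → ℕ) (h : SplitStep D A B) : SplitStep D (A + X) (B + X) := by
  obtain ⟨v, C, rfl, rfl⟩ := h
  exact ⟨v, C + X, add_right_comm _ _ _, add_right_comm _ _ _⟩

lemma diamond (h : SplitStep D A B) (h' : SplitStep D A B') :
    ∃ N, ReflGen (SplitStep D) B N ∧ ReflTransGen (SplitStep D) B' N := by
  obtain ⟨u, C₁, rfl, rfl⟩ := h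
  obtain ⟨v, C₂, hA, rfl⟩ := h'
  by_cases huv : u = v
  · subst huv
    obtain rfl := add_right_cancel hA
    exact ⟨_, .refl, .refl⟩
  · set C := C₁ - chi D v
    have h₁ : C₁ = C + chi D v :=
      (tsub_add_cancel_of_le (chi_le_of_add_chi_eq_add_chi huv hA)).symm
    have h₂ : C₂ = C + chi D u :=
      add_right_cancel (b := chi D v) (by rw [← hA, h₁, add_right_comm])
    refine ⟨C + adjRow D u + adjRow D v, .single ⟨v, C + adjRow D u, ?_, rfl⟩,
      .single ⟨u, C + adjRow D v, ?_, add_right_comm _ _ _⟩⟩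
    · rw [h₁, add_right_comm]
    · rw [h₂, add_right_comm]

lemma reflTransGen_add (h : ReflTransGen (SplitStep D) A B)
    (h' : ReflTransGen (SplitStep D) A' B') : ReflTransGen (SplitStep D) (A + A') (B + B') := by
  refine (h.lift (· + A') fun _ _ h => h.add_right A').trans ?_
  simpa only [add_comm B] using h'.lift (· + B) fun _ _ h => h.add_right B

end SplitStep

namespace IsCut

variable {D : Digraph'} [Fintype D.E]

/-- Replacing the siblings of a longest walk by their parent undoes one split. -/
lemma exists_prune (hV : CoreV D = Set.univ) {v : D.V} {P : Finset (FinWalk D)}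
    (hP : IsCut D v P) (hne : ∃ p ∈ P, p.ed ≠ []) :
    ∃ P' u E, IsCut D v P' ∧ ∑ p ∈ P', p.ed.length < ∑ p ∈ P, p.ed.length ∧
      endCount D P' = E + chi D u ∧ endCount D P = E + adjRow D u := by
  classical
  obtain ⟨p₀, hp₀, hne₀⟩ := hne
  obtain ⟨p, hp, hmax⟩ := P.exists_max_image (fun r => r.ed.length) ⟨p₀, hp₀⟩
  have hpne : p.ed ≠ [] := by
    have := hmax p₀ hp₀
    rw [← List.length_pos_iff] at hne₀ ⊢
    omega
  obtain ⟨p', f, hf, rfl⟩ := exists_eq_concat hpne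
  have hS := hP.children_subset hV hp (by simpa using hmax)
  have hp' : p' ∉ P \ p'.children :=
    fun h => hP.notMem_of_concat_mem hV hp (Finset.mem_sdiff.1 h).1
  let u : ↥(CoreV D) := ⟨endVert D p', hV ▸ Set.mem_univ _⟩
  refine ⟨insert p' (P \ p'.children), u, endCount D (P \ p'.children),
    hP.insert_sdiff hS (hP.1 (p'.concat f hf) hp) fun q => begins_iff_exists_mem_children, ?_,
    endCount_insert hp' rfl, by rw [← endCount_sdiff_add hS, endCount_children (u := u) rfl]⟩
  have hchild : (p'.concat f hf).ed.length ≤ ∑ r ∈ p'.children, r.ed.length :=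
    Finset.single_le_sum (f := fun r : FinWalk D => r.ed.length) (fun _ _ => Nat.zero_le _)
      (mem_children.2 ⟨f, hf, rfl⟩)
  rw [Finset.sum_insert hp', ← Finset.sum_sdiff hS]
  simp only [concat_ed, List.length_append, List.length_singleton] at hchild
  omega

theorem reflTransGen_splitStep (hV : CoreV D = Set.univ) {v : ↥(CoreV D)}
    {P : Finset (FinWalk D)} (hP : IsCut D v.1 P) (C : ↥(CoreV D) → ℕ) :
    ReflTransGen (SplitStep D) (C + chi D v) (C + endCount D P) := by
  by_cases hne : ∃ p ∈ P, p.ed ≠ []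
  · obtain ⟨P', u, E, hP', hlt, hP'count, hPcount⟩ := hP.exists_prune hV hne
    have ih := hP'.reflTransGen_splitStep hV C
    rw [hP'count, ← add_assoc] at ih
    rw [hPcount, ← add_assoc]
    exact ih.tail ⟨u, C + E, rfl, rfl⟩
  · push Not at hne
    rw [hP.eq_singleton_nil hV hne, endCount_singleton_nil]
termination_by ∑ p ∈ P, p.ed.length

end IsCut

section Refinement

variable {D : Digraph'} {A B : ↥(CoreV D) → ℕ}

lemma elemRefine_iff (hE : CoreE D = Set.univ) :
    ElemRefine D A B ↔ ∃ v P C, IsCut D v.1 P ∧ A = C + chi D v ∧ B = C + endCount D P := by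
  have hcore : ∀ e, e ∈ CoreE D := fun e => hE ▸ Set.mem_univ e
  constructor
  · rintro ⟨v, P, hv, hst, hex, hB⟩
    have hA : chi D v ≤ A := fun w => by
      by_cases hw : w = v
      · subst hw
        simpa [chi, Nat.one_le_iff_ne_zero, Nat.pos_iff_ne_zero] using hv
      · simp [chi, hw]
    refine ⟨v, P, A - chi D v, ⟨fun p hp => (hst p hp).1, fun q hq => hex q hq fun i => hcore _⟩,
      (tsub_add_cancel_of_le hA).symm, funext fun w => ?_⟩
    rw [hB w]
    simp [chi, endCount]
  · rintro ⟨v, P, C, hP, rfl, rfl⟩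
    refine ⟨v, P, by simp [chi], fun p hp => ⟨hP.1 p hp, fun e _ => hcore e⟩,
      fun q hq _ => hP.2 q hq, fun w => ?_⟩
    simp [chi, endCount]

lemma ElemRefine.reflTransGen_splitStep [Fintype D.E] (hV : CoreV D = Set.univ)
    (hE : CoreE D = Set.univ) (h : ElemRefine D A B) : ReflTransGen (SplitStep D) A B := by
  obtain ⟨v, P, C, hP, rfl, rfl⟩ := (elemRefine_iff hE).1 h
  exact hP.reflTransGen_splitStep hV C

lemma SplitStep.elemRefine [Fintype D.E] (hE : CoreE D = Set.univ) (h : SplitStep D A B) :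
    ElemRefine D A B := by
  obtain ⟨v, C, rfl, rfl⟩ := h
  exact (elemRefine_iff hE).2 ⟨v, (nil v.1).children, C, IsCut.children_nil v.1, rfl,
    by rw [endCount_children rfl]⟩

lemma refine_eq_reflTransGen_splitStep [Fintype D.E] (hV : CoreV D = Set.univ)
    (hE : CoreE D = Set.univ) : Refine D = ReflTransGen (SplitStep D) :=
  le_antisymm (reflTransGen_closed fun _ _ h => h.reflTransGen_splitStep hV hE)
    (ReflTransGen.mono fun _ _ h => h.elemRefine hE)

end Refinement

def splitCon (D : Digraph') : AddCon (↥(CoreV D) → ℕ) where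
  r := Join (ReflTransGen (SplitStep D))
  iseqv := equivalence_join_reflTransGen fun _ _ _ => SplitStep.diamond
  add' := fun ⟨N, h₁, h₂⟩ ⟨N', h₁', h₂'⟩ =>
    ⟨N + N', SplitStep.reflTransGen_add h₁ h₁', SplitStep.reflTransGen_add h₂ h₂'⟩

lemma addConGen_eq_splitCon (D : Digraph') :
    addConGen (fun A B => ∃ v, A = chi D v ∧ B = adjRow D v) = splitCon D := by
  set c := addConGen fun A B => ∃ v, A = chi D v ∧ B = adjRow D v
  refine le_antisymm (AddCon.addConGen_le.2 ?_) fun A B h => ?_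
  · rintro _ _ ⟨v, rfl, rfl⟩
    exact ⟨adjRow D v, .single ⟨v, 0, (zero_add _).symm, (zero_add _).symm⟩, .refl⟩
  · have hsplit : ReflTransGen (SplitStep D) ≤ c := fun A B h => by
      induction h with
      | refl => exact c.refl _
      | tail _ hstep ih =>
        obtain ⟨v, C, rfl, rfl⟩ := hstep
        exact c.trans ih (c.add (c.refl C) (AddConGen.Rel.of _ _ ⟨v, rfl, rfl⟩))
    exact join_le_of_equivalence_of_le c.iseqv hsplit A B h

theorem stmt12_general (D : Digraph') [Fintype D.E]
    (hV : CoreV D = Set.univ) (hE : CoreE D = Set.univ)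
    (M₁ M₂ : ↥(CoreV D) → ℕ) :
    addConGen (fun A B => ∃ v, A = chi D v ∧ B = adjRow D v) M₁ M₂ ↔
      ∃ N, Refine D M₁ N ∧ Refine D M₂ N := by
  rw [addConGen_eq_splitCon, refine_eq_reflTransGen_splitStep hV hE]
  rfl

/-- For a finite digraph equal to its core, the congruence generated by the pairs
`(χ_v, Σ_w Adj_D(v,w)·χ_w)` coincides with the common-refinement congruence `∼_D`. -/
theorem stmt12 (D : Digraph') [Fintype D.V] [Fintype D.E]
    (hV : CoreV D = Set.univ) (hE : CoreE D = Set.univ)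
    (M₁ M₂ : ↥(CoreV D) → ℕ) :
    addConGen (fun A B => ∃ v, A = chi D v ∧ B = adjRow D v) M₁ M₂ ↔
      ∃ N, Refine D M₁ N ∧ Refine D M₂ N :=
  stmt12_general D hV hE M₁ M₂
end

section
/- Let D be a strongly connected UDAF digraph with at least one edge. Then the quotient MS(D)/~_D of the multiset semigroup (nonzero elements of ℕ^{V_D}) by the congruence ~_D is an abelian group, isomorphic to the abelian group ℤ^{V_D}/⟨rows of Rel_D⟩, i.e., the abelian group presented by generators V_D and relations 0 = −v + Σ_w Adj_D(v,w)·w. -/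
noncomputable def adjCount (D : Digraph') (v w : D.V) : ℕ :=
  Set.ncard {e : D.E | D.s e = v ∧ D.t e = w}

open Classical in
/-- Row `v` of the relator matrix `Adj_D − I`. -/
noncomputable def relRow (D : Digraph') (v : D.V) : D.V → ℤ :=
  fun w => (adjCount D v w : ℤ) - (if v = w then 1 else 0)

open Classical in
/-- The congruence on `ℕ^{V_D}` generated by `v = Σ_w Adj_D(v,w)·w`. -/
noncomputable def dimConFull (D : Digraph') : AddCon (D.V → ℕ) :=
  addConGen (fun A B => ∃ v : D.V,
    A = (fun w => if w = v then 1 else 0) ∧ B = fun w => adjCount D v w)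

def toInt {D : Digraph'} (M : D.V → ℕ) : D.V → ℤ := fun v => (M v : ℤ)

def StrongConn (D : Digraph') : Prop :=
  ∀ v w : D.V, ∃ p : FinWalk D, p.start = v ∧ endVert D p = w

/-!
The map `M ↦ M + ⟨rows of Adj_D − I⟩` is additive and constant on `∼_D`-classes, since the two
sides of each generating relation `v ∼ Σ_w Adj_D(v,w)·w` differ by a row. Conversely, every
element of that subgroup has the form `Y − X` with `X ∼_D Y`, so equal images give
`M₁ + Y = M₂ + X` and it remains to cancel `X` in the congruence.

Cancellation comes from a neutral element. Along an edge `v → w`, `v` rewrites to `w` plus a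
leftover, so by strong connectivity every vertex yields every other one. UDAF forces a vertex
with two out-edges, hence `v` yields `2v` and then any multiset. Writing `v ∼ 2v + T`, the
element `e = v + T` satisfies `M ∼ M + e` for every nonzero `M`, and each `Y` has an `N` with
`e ∼ Y + N`. These inverses also give surjectivity: `P − Q` is the image of `P + N + e` where
`e ∼ Q + N`.
-/

namespace Digraph'

variable {D : Digraph'}

theorem endVert_mem_of_forall_edge {S : Set D.V} (hS : ∀ e, D.s e ∈ S → D.t e ∈ S)
    (p : FinWalk D) (hp : p.start ∈ S) : endVert D p ∈ S := by
  obtain ⟨v, l, hc, hh⟩ := p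
  simp only [endVert] at hp ⊢
  induction l generalizing v with
  | nil => exact hp
  | cons e l ih =>
    have he : D.t e ∈ S := hS e (by rwa [hh e rfl])
    cases l with
    | nil => exact he
    | cons e' l =>
      rw [List.getLast?_cons_cons]
      refine ih (D.t e) hc.tail (fun _ h => ?_) he
      cases h
      exact (List.isChain_cons_cons.mp hc).1.symm

theorem exists_source_eq_of_strongConn (hsc : StrongConn D) (he : Nonempty D.E) (v : D.V) :
    ∃ e, D.s e = v := by
  obtain ⟨e₀⟩ := he
  by_contra! h
  obtain ⟨p, hv, hp⟩ := hsc v (D.s e₀)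
  have := endVert_mem_of_forall_edge (S := {v}) (fun e he => absurd he (h e)) p hv
  exact h e₀ (hp ▸ this)

theorem FwdWalk.ext {p q : FwdWalk D} (h : p.ed = q.ed) : p = q := by
  cases p; cases q; cases h; rfl

theorem exists_ne_source_eq_of_isUDAF (hU : IsUDAF D) (hsc : StrongConn D) (he : Nonempty D.E) :
    ∃ e₁ e₂ : D.E, e₁ ≠ e₂ ∧ D.s e₁ = D.s e₂ := by
  classical
  choose out hout using exists_source_eq_of_strongConn hsc he
  obtain ⟨e₀⟩ := he
  obtain ⟨p, hp⟩ : ∃ p : FwdWalk D, D.s (p.ed 0) = D.s e₀ :=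
    ⟨⟨fun n => Nat.rec (out (D.s e₀)) (fun _ e => out (D.t e)) n, fun _ => (hout _).symm⟩,
      hout _⟩
  obtain ⟨q, hq, hqp⟩ : ∃ q : FwdWalk D, D.s (q.ed 0) = D.s e₀ ∧ q ≠ p := by
    by_contra! h
    exact hU.1 _ ⟨p, hp, h⟩
  have hdiff : ∃ i, q.ed i ≠ p.ed i := by
    by_contra! h
    exact hqp (FwdWalk.ext (funext h))
  -- At the first edge where `q` and `p` differ, they leave the same vertex.
  obtain ⟨i, hi, hmin⟩ : ∃ i, q.ed i ≠ p.ed i ∧ ∀ j < i, q.ed j = p.ed j :=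
    ⟨Nat.find hdiff, Nat.find_spec hdiff, fun j hj => not_not.mp (Nat.find_min hdiff hj)⟩
  refine ⟨q.ed i, p.ed i, hi, ?_⟩
  cases i with
  | zero => exact hq.trans hp.symm
  | succ j => rw [← q.chain, ← p.chain, hmin j j.lt_succ_self]

theorem sum_single_target_le_adjCount [DecidableEq D.V] [Finite D.E] {u : D.V}
    (S : Finset D.E) (hS : ∀ e ∈ S, D.s e = u) :
    ∑ e ∈ S, Pi.single (D.t e) 1 ≤ adjCount D u := by
  intro w
  rw [Finset.sum_apply]
  simp only [Pi.single_apply, Finset.sum_boole, Nat.cast_id, adjCount]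
  rw [← Set.ncard_coe_finset]
  exact Set.ncard_le_ncard (fun e he => by simp_all) (Set.toFinite _)

section Yields

variable (D) in
def Yields (A B : D.V → ℕ) : Prop :=
  ∃ C, dimConFull D A (B + C)

theorem Yields.of_le {A B : D.V → ℕ} (h : B ≤ A) : Yields D A B := by
  obtain ⟨C, rfl⟩ := le_iff_exists_add.mp h
  exact ⟨C, (dimConFull D).refl _⟩

theorem Yields.trans {A B B' : D.V → ℕ} (h : Yields D A B) (h' : Yields D B B') :
    Yields D A B' := by
  obtain ⟨C, hC⟩ := h
  obtain ⟨C', hC'⟩ := h'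
  refine ⟨C' + C, ?_⟩
  rw [← add_assoc]
  exact (dimConFull D).trans hC ((dimConFull D).add hC' ((dimConFull D).refl C))

theorem Yields.add {A B A' B' : D.V → ℕ} (h : Yields D A B) (h' : Yields D A' B') :
    Yields D (A + A') (B + B') := by
  obtain ⟨C, hC⟩ := h
  obtain ⟨C', hC'⟩ := h'
  refine ⟨C + C', ?_⟩
  rw [add_add_add_comm]
  exact (dimConFull D).add hC hC'

theorem Yields.nsmul {A B : D.V → ℕ} (h : Yields D A B) (n : ℕ) :
    Yields D (n • A) (n • B) := by
  obtain ⟨C, hC⟩ := h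
  exact ⟨n • C, by rw [← smul_add]; exact (dimConFull D).nsmul n hC⟩

theorem Yields.sum {ι : Type*} (s : Finset ι) {f g : ι → D.V → ℕ}
    (h : ∀ i ∈ s, Yields D (f i) (g i)) : Yields D (∑ i ∈ s, f i) (∑ i ∈ s, g i) := by
  choose C hC using h
  refine ⟨∑ i ∈ s.attach, C i i.2, ?_⟩
  rw [← Finset.sum_attach s g, ← Finset.sum_add_distrib, ← Finset.sum_attach s f]
  exact (dimConFull D).finsetSum _ fun i _ => hC i i.2

variable [DecidableEq D.V]

theorem dimConFull_single_adjCount (v : D.V) :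
    dimConFull D (Pi.single v 1) (adjCount D v) :=
  AddConGen.Rel.of _ _ ⟨v, by ext w; simp [Pi.single_apply], rfl⟩

theorem yields_single_of_le_adjCount {v : D.V} {B : D.V → ℕ} (h : B ≤ adjCount D v) :
    Yields D (Pi.single v 1) B :=
  Yields.trans ⟨0, by simpa using dimConFull_single_adjCount v⟩ (Yields.of_le h)

end Yields

section Production

variable [DecidableEq D.V] [Finite D.E]

theorem yields_single_source_target (e : D.E) :
    Yields D (Pi.single (D.s e) 1) (Pi.single (D.t e) 1) :=
  yields_single_of_le_adjCount (by simpa using sum_single_target_le_adjCount {e} (by simp))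

theorem yields_single_of_strongConn (hsc : StrongConn D) (v w : D.V) :
    Yields D (Pi.single v 1) (Pi.single w 1) := by
  obtain ⟨p, rfl, rfl⟩ := hsc v w
  exact endVert_mem_of_forall_edge (S := {w | Yields D (Pi.single p.start 1) (Pi.single w 1)})
    (fun e he => Yields.trans he (yields_single_source_target e)) p (Yields.of_le le_rfl)

variable (hU : IsUDAF D) (hsc : StrongConn D) (he : Nonempty D.E)
include hU hsc he

theorem yields_two_nsmul_single (v : D.V) :
    Yields D (Pi.single v 1) (2 • Pi.single v 1) := by
  classical
  obtain ⟨e₁, e₂, hne, hs⟩ := exists_ne_source_eq_of_isUDAF hU hsc he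
  have hbranch :
      Yields D (Pi.single (D.s e₁) 1) (Pi.single (D.t e₁) 1 + Pi.single (D.t e₂) 1) :=
    yields_single_of_le_adjCount (by
      simpa [Finset.sum_pair hne] using sum_single_target_le_adjCount {e₁, e₂} (by simp [hs]))
  rw [two_nsmul]
  exact Yields.trans (yields_single_of_strongConn hsc _ _) (Yields.trans hbranch
    (Yields.add (yields_single_of_strongConn hsc _ _) (yields_single_of_strongConn hsc _ _)))

theorem yields_nsmul_single (v : D.V) (n : ℕ) :
    Yields D (Pi.single v 1) (n • Pi.single v 1) := by
  induction n with
  | zero => simpa using Yields.of_le (zero_le : 0 ≤ Pi.single v 1)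
  | succ n ih =>
    refine Yields.trans (yields_two_nsmul_single hU hsc he v) ?_
    rw [two_nsmul, succ_nsmul]
    exact Yields.add ih (Yields.of_le le_rfl)

theorem yields_single [Fintype D.V] (v : D.V) (B : D.V → ℕ) : Yields D (Pi.single v 1) B := by
  have hB : ∑ w, B w • Pi.single w 1 = B := by
    simpa [← Pi.single_smul] using Finset.univ_sum_single B
  rw [← hB]
  refine Yields.trans (yields_nsmul_single hU hsc he v (∑ w, B w)) ?_
  rw [Finset.sum_smul]
  exact Yields.sum _ fun w _ => Yields.nsmul (yields_single_of_strongConn hsc v w) _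

end Production

theorem exists_single_add_of_ne_zero [DecidableEq D.V] {M : D.V → ℕ} (hM : M ≠ 0) :
    ∃ w, ∃ M₀ : D.V → ℕ, M = Pi.single w 1 + M₀ := by
  obtain ⟨w, hw⟩ := Function.ne_iff.mp hM
  refine ⟨w, le_iff_exists_add.mp fun u => ?_⟩
  by_cases hu : u = w
  · subst hu; simpa [Nat.one_le_iff_ne_zero] using hw
  · simp [hu]

section Group

variable [Fintype D.V] [Finite D.E] (hU : IsUDAF D) (hsc : StrongConn D) (he : Nonempty D.E)
include hU hsc he

theorem exists_neutral :
    ∃ e : D.V → ℕ, e ≠ 0 ∧ (∀ M, M ≠ 0 → dimConFull D M (M + e)) ∧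
      ∀ Y, ∃ N, dimConFull D e (Y + N) := by
  classical
  obtain ⟨v⟩ : Nonempty D.V := he.map D.s
  obtain ⟨T, hT⟩ := yields_two_nsmul_single hU hsc he v
  rw [two_nsmul, add_assoc] at hT
  refine ⟨Pi.single v 1 + T, fun h => by simpa using congr_fun h v, ?_, fun Y => ?_⟩
  · have hsingle : ∀ w, dimConFull D (Pi.single w 1) (Pi.single w 1 + (Pi.single v 1 + T)) := by
      intro w
      obtain ⟨E, hE⟩ := yields_single_of_strongConn hsc w v
      have hvE := (dimConFull D).add hT ((dimConFull D).refl E)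
      rw [add_right_comm] at hvE
      exact (dimConFull D).trans hE ((dimConFull D).trans hvE
        ((dimConFull D).add ((dimConFull D).symm hE) ((dimConFull D).refl _)))
    intro M hM
    obtain ⟨w, M₀, rfl⟩ := exists_single_add_of_ne_zero hM
    rw [add_right_comm]
    exact (dimConFull D).add (hsingle w) ((dimConFull D).refl M₀)
  · obtain ⟨X, hX⟩ := yields_single hU hsc he v Y
    exact ⟨X + T, by rw [← add_assoc]; exact (dimConFull D).add hX ((dimConFull D).refl T)⟩

theorem dimConFull_add_right_cancel {A B Y : D.V → ℕ} (hA : A ≠ 0) (hB : B ≠ 0)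
    (h : dimConFull D (A + Y) (B + Y)) : dimConFull D A B := by
  obtain ⟨e, -, hneutral, hinv⟩ := exists_neutral hU hsc he
  obtain ⟨N, hN⟩ := hinv Y
  have hcancel : ∀ M, M ≠ 0 → dimConFull D M (M + Y + N) := fun M hM => by
    rw [add_assoc]
    exact (dimConFull D).trans (hneutral M hM) ((dimConFull D).add ((dimConFull D).refl M) hN)
  exact (dimConFull D).trans (hcancel A hA)
    ((dimConFull D).trans ((dimConFull D).add h ((dimConFull D).refl N))
      ((dimConFull D).symm (hcancel B hB)))

end Group

section Presentation

variable (D) in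
noncomputable def quotMap :
    (D.V → ℕ) →+ (D.V → ℤ) ⧸ AddSubgroup.closure (Set.range (relRow D)) :=
  (QuotientAddGroup.mk' _).comp ((Nat.castAddMonoidHom ℤ).compLeft D.V)

theorem quotMap_apply (M : D.V → ℕ) : quotMap D M = QuotientAddGroup.mk (toInt M) := rfl

theorem toInt_add (A B : D.V → ℕ) : toInt (A + B) = toInt A + toInt B := by
  ext; simp [toInt]

theorem toInt_injective : Function.Injective (toInt : (D.V → ℕ) → D.V → ℤ) :=
  fun _ _ h => funext fun v => Nat.cast_injective (congr_fun h v)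

theorem toInt_adjCount_sub_single [DecidableEq D.V] (v : D.V) :
    toInt (adjCount D v) - toInt (Pi.single v 1) = relRow D v := by
  ext w; simp [toInt, relRow, Pi.single_apply, eq_comm]

theorem dimConFull_le_ker_quotMap : dimConFull D ≤ AddCon.ker (quotMap D) := by
  classical
  refine AddCon.addConGen_le.mpr ?_
  rintro _ _ ⟨v, rfl, rfl⟩
  have hsingle : (fun w => if w = v then 1 else 0 : D.V → ℕ) = Pi.single v 1 := by
    ext w; simp [Pi.single_apply]
  rw [AddCon.ker_rel, quotMap_apply, quotMap_apply, QuotientAddGroup.eq, neg_add_eq_sub,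
    hsingle, toInt_adjCount_sub_single]
  exact AddSubgroup.subset_closure (Set.mem_range_self v)

theorem exists_dimConFull_of_mem_closure {z : D.V → ℤ}
    (hz : z ∈ AddSubgroup.closure (Set.range (relRow D))) :
    ∃ X Y, dimConFull D X Y ∧ toInt Y - toInt X = z := by
  classical
  induction hz using AddSubgroup.closure_induction with
  | mem _ hz =>
    obtain ⟨v, rfl⟩ := hz
    exact ⟨_, _, dimConFull_single_adjCount v, toInt_adjCount_sub_single v⟩
  | zero => exact ⟨0, 0, (dimConFull D).refl 0, sub_self _⟩
  | add _ _ _ _ h₁ h₂ =>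
    obtain ⟨X₁, Y₁, c₁, rfl⟩ := h₁
    obtain ⟨X₂, Y₂, c₂, rfl⟩ := h₂
    exact ⟨X₁ + X₂, Y₁ + Y₂, (dimConFull D).add c₁ c₂, by
      rw [toInt_add, toInt_add]; abel⟩
  | neg _ _ h =>
    obtain ⟨X, Y, c, rfl⟩ := h
    exact ⟨Y, X, (dimConFull D).symm c, (neg_sub _ _).symm⟩

variable [Fintype D.V] [Finite D.E] (hU : IsUDAF D) (hsc : StrongConn D) (he : Nonempty D.E)
include hU hsc he

theorem dimConFull_of_quotMap_eq {M₁ M₂ : D.V → ℕ} (hM₁ : M₁ ≠ 0) (hM₂ : M₂ ≠ 0)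
    (h : quotMap D M₁ = quotMap D M₂) : dimConFull D M₁ M₂ := by
  rw [quotMap_apply, quotMap_apply, QuotientAddGroup.eq] at h
  obtain ⟨X, Y, hXY, hz⟩ := exists_dimConFull_of_mem_closure h
  have hsum : M₁ + Y = M₂ + X :=
    toInt_injective (by rw [toInt_add, toInt_add]; linear_combination hz)
  refine dimConFull_add_right_cancel hU hsc he hM₁ hM₂ (Y := X) ?_
  rw [← hsum]
  exact (dimConFull D).add ((dimConFull D).refl M₁) hXY

theorem exists_ne_zero_quotMap_eq
    (g : (D.V → ℤ) ⧸ AddSubgroup.closure (Set.range (relRow D))) :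
    ∃ M, M ≠ 0 ∧ quotMap D M = g := by
  obtain ⟨e, he0, hneutral, hinv⟩ := exists_neutral hU hsc he
  obtain ⟨x, rfl⟩ := QuotientAddGroup.mk_surjective g
  set P : D.V → ℕ := fun v => (x v).toNat
  set Q : D.V → ℕ := fun v => (-x v).toNat
  obtain ⟨N, hN⟩ := hinv Q
  have he_zero : quotMap D e = 0 := by
    simpa using (AddCon.ker_rel _).mp (dimConFull_le_ker_quotMap (hneutral e he0))
  have hQN : quotMap D Q + quotMap D N = 0 := by
    rw [← map_add, ← (AddCon.ker_rel _).mp (dimConFull_le_ker_quotMap hN), he_zero]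
  refine ⟨P + N + e, fun h => he0 (add_eq_zero.mp h).2, ?_⟩
  calc quotMap D (P + N + e) = quotMap D P - quotMap D Q := by
        rw [map_add, map_add, he_zero, add_zero, sub_eq_add_neg, add_right_inj,
          eq_neg_iff_add_eq_zero, add_comm, hQN]
    _ = QuotientAddGroup.mk x := by
        rw [quotMap_apply, quotMap_apply, ← QuotientAddGroup.mk_sub]
        congr 1
        ext v
        exact Int.toNat_sub_toNat_neg (x v)

end Presentation

end Digraph'

open Digraph'

/-- For a strongly connected UDAF digraph with an edge, the quotient of the
multiset semigroup (nonzero multisets) by `∼_D` is an abelian group, isomorphic to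
`ℤ^{V_D}` modulo the subgroup generated by the rows of the relator matrix: the
natural map is additive, identifies exactly `∼_D`-related nonzero multisets, and
every element of the group is the image of a nonzero multiset. -/
theorem stmt15 (D : Digraph') [Fintype D.V] [Fintype D.E]
    (hU : IsUDAF D) (hsc : StrongConn D) (he : Nonempty D.E) :
    ∀ f : (D.V → ℕ) → ((D.V → ℤ) ⧸ AddSubgroup.closure (Set.range (relRow D))),
      (∀ M, f M = QuotientAddGroup.mk (toInt M)) →
      (∀ M₁ M₂ : D.V → ℕ, M₁ ≠ 0 → M₂ ≠ 0 → (dimConFull D M₁ M₂ ↔ f M₁ = f M₂)) ∧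
      (∀ g, ∃ M : D.V → ℕ, M ≠ 0 ∧ f M = g) ∧
      (∀ M₁ M₂, f (M₁ + M₂) = f M₁ + f M₂) := by
  intro f hf
  obtain rfl : f = quotMap D := funext hf
  exact ⟨fun M₁ M₂ hM₁ hM₂ => ⟨fun h => (AddCon.ker_rel _).mp (dimConFull_le_ker_quotMap h),
      dimConFull_of_quotMap_eq hU hsc he hM₁ hM₂⟩,
    exists_ne_zero_quotMap_eq hU hsc he, map_add _⟩
end
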